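/- arXiv:1609.02644 — 5 statements merged into one kernel-verified Lean document; each statement's English description precedes it below -/
import Mathlib

section
/- With the equivariant tree labeling setup, the map E_γ(ρ) : π → G defined by E_γ(ρ)(A) = ρ(A) · W_γ(v₀, v₀·A) is a group homomorphism: for all A, B ∈ π, E_γ(ρ)(A B) = E_γ(ρ)(A) · E_γ(ρ)(B), and E_γ(ρ)(A⁻¹) = E_γ(ρ)(A)⁻¹. -/
/-!
Write `c A = W(v₀, v₀·A)`. Splitting a walk from `v₀` to `v₀·AB` at `v₀·B`, and using
that translating a walk by `B` conjugates its γ-product by `ρ(B)`, gives the twisted cocycle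
identity `c(AB) = ρ(B)⁻¹ c(A) ρ(B) c(B)`, which says precisely that `A ↦ ρ(A) c(A)` is
multiplicative. A multiplicative map between groups preserves inverses.
-/

namespace SimpleGraph

variable {V : Type*} {T : SimpleGraph V} {G : Type*} [Group G] {γ : T.Dart → G}
  {W : V → V → G}

theorem walkProd_eq_mul_of_preconnected
    (hW : ∀ (u v : V) (p : T.Walk u v), W u v = ((p.darts.map γ).reverse).prod)
    (hT : T.Preconnected) (u v w : V) : W u w = W v w * W u v := by
  obtain ⟨p⟩ := hT u v
  obtain ⟨q⟩ := hT v w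
  rw [hW u w (p.append q), hW u v p, hW v w q, Walk.darts_append, List.map_append,
    List.reverse_append, List.prod_append]

theorem walkProd_map_eq_conj
    (hW : ∀ (u v : V) (p : T.Walk u v), W u v = ((p.darts.map γ).reverse).prod)
    (f : T →g T) (g : G) (hf : ∀ d : T.Dart, γ (f.mapDart d) = g⁻¹ * γ d * g)
    {u v : V} (p : T.Walk u v) : W (f u) (f v) = g⁻¹ * W u v * g := by
  have hγ : γ ∘ f.mapDart = MulAut.conj g⁻¹ ∘ γ := by
    funext d
    rw [Function.comp_apply, hf, Function.comp_apply, MulAut.conj_apply, inv_inv]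
  rw [hW _ _ (p.map f), hW u v p, Walk.darts_map, List.map_map, hγ, ← List.map_map,
    ← List.map_reverse, ← map_list_prod, MulAut.conj_apply, inv_inv]

end SimpleGraph

def MonoidHom.twistByCocycle {π G : Type*} [Group π] [Group G] (ρ : π →* G) (c : π → G)
    (hc : ∀ A B, c (A * B) = (ρ B)⁻¹ * c A * ρ B * c B) : π →* G :=
  MonoidHom.mk' (fun A => ρ A * c A) fun A B => by
    rw [hc, map_mul]
    group

theorem deformation_is_homomorphism_general
    {V : Type*} (T : SimpleGraph V) (hT : T.IsTree)
    {G : Type*} [Group G] (γ : T.Dart → G)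
    -- `W u v` is the common value of the ordered γ-product over walks from `u` to `v`
    (W : V → V → G)
    (hW : ∀ (u v : V) (p : T.Walk u v), W u v = ((p.darts.map γ).reverse).prod)
    -- right action of π on V by automorphisms of T
    {π : Type*} [Group π] (act : V → π → V)
    (hact_mul : ∀ (v : V) (A B : π), act (act v A) B = act v (A * B))
    (hadj : ∀ (u v : V) (A : π), T.Adj u v ↔ T.Adj (act u A) (act v A))
    (ρ : π →* G)
    -- ρ-equivariance of γ with respect to the induced right action on darts
    (hequiv : ∀ (d : T.Dart) (A : π),
      γ ⟨(act d.toProd.1 A, act d.toProd.2 A), (hadj d.toProd.1 d.toProd.2 A).mp d.adj⟩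
        = (ρ A)⁻¹ * γ d * ρ A)
    (v₀ : V) :
    (∀ A B : π, ρ (A * B) * W v₀ (act v₀ (A * B))
      = (ρ A * W v₀ (act v₀ A)) * (ρ B * W v₀ (act v₀ B))) ∧
    (∀ A : π, ρ A⁻¹ * W v₀ (act v₀ A⁻¹) = (ρ A * W v₀ (act v₀ A))⁻¹) := by
  have hconn : T.Preconnected := hT.connected.preconnected
  have hc : ∀ A B, W v₀ (act v₀ (A * B))
      = (ρ B)⁻¹ * W v₀ (act v₀ A) * ρ B * W v₀ (act v₀ B) := by
    intro A B
    let translate : T →g T := ⟨fun x => act x B, (hadj _ _ B).mp⟩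
    obtain ⟨p⟩ := hconn v₀ (act v₀ A)
    rw [T.walkProd_eq_mul_of_preconnected hW hconn _ (act v₀ B), ← hact_mul, mul_left_inj]
    exact T.walkProd_map_eq_conj hW translate (ρ B) (fun d => hequiv d B) p
  let E := ρ.twistByCocycle (fun A => W v₀ (act v₀ A)) hc
  exact ⟨map_mul E, map_inv E⟩

/-- Propositions 2.5 and 2.8: with the equivariant tree labeling setup, the deformation
`E_γ(ρ)(A) = ρ(A) · W_γ(v₀, v₀·A)` is a group homomorphism. -/
theorem deformation_is_homomorphism
    {V : Type*} (T : SimpleGraph V) (hT : T.IsTree)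
    {G : Type*} [Group G] (γ : T.Dart → G)
    (hsymm : ∀ d : T.Dart, γ d.symm = (γ d)⁻¹)
    -- `W u v` is the common value of the ordered γ-product over walks from `u` to `v`
    (W : V → V → G)
    (hW : ∀ (u v : V) (p : T.Walk u v), W u v = ((p.darts.map γ).reverse).prod)
    -- right action of π on V by automorphisms of T
    {π : Type*} [Group π] (act : V → π → V)
    (hact_one : ∀ v, act v 1 = v)
    (hact_mul : ∀ (v : V) (A B : π), act (act v A) B = act v (A * B))
    (hadj : ∀ (u v : V) (A : π), T.Adj u v ↔ T.Adj (act u A) (act v A))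
    (ρ : π →* G)
    -- ρ-equivariance of γ with respect to the induced right action on darts
    (hequiv : ∀ (d : T.Dart) (A : π),
      γ ⟨(act d.toProd.1 A, act d.toProd.2 A), (hadj d.toProd.1 d.toProd.2 A).mp d.adj⟩
        = (ρ A)⁻¹ * γ d * ρ A)
    (v₀ : V) :
    (∀ A B : π, ρ (A * B) * W v₀ (act v₀ (A * B))
      = (ρ A * W v₀ (act v₀ A)) * (ρ B * W v₀ (act v₀ B))) ∧
    (∀ A : π, ρ A⁻¹ * W v₀ (act v₀ A⁻¹) = (ρ A * W v₀ (act v₀ A))⁻¹) :=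
  deformation_is_homomorphism_general T hT γ W hW act hact_mul hadj ρ hequiv v₀
end

section
/- With the equivariant tree labeling setup, let v₀' be a second base vertex and define E'_γ(ρ) : π → G by E'_γ(ρ)(A) = ρ(A) · W_γ(v₀', v₀'·A). Then for every A ∈ π, E'_γ(ρ)(A) = P · E_γ(ρ)(A) · P⁻¹, where P = W_γ(v₀, v₀'). -/
/-! Join `v₀'` to `v₀'·A` by the walk `p⁻¹ · q · (p·A)`, where `p` runs from `v₀` to `v₀'` and `q`
from `v₀` to `v₀·A`. Ordered products turn concatenation into multiplication and reversal into
inversion, and by equivariance of `γ` the translated walk `p·A` has product `ρ(A)⁻¹ P ρ(A)`; hence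
`W v₀' (v₀'·A) = ρ(A)⁻¹ P ρ(A) · W v₀ (v₀·A) · P⁻¹`. -/

namespace SimpleGraph.Walk

variable {V V' M N : Type*} {T : SimpleGraph V} {T' : SimpleGraph V'}

def dartProd [Monoid M] (γ : T.Dart → M) {u v : V} (p : T.Walk u v) : M :=
  ((p.darts.map γ).reverse).prod

theorem dartProd_append [Monoid M] (γ : T.Dart → M) {u v w : V} (p : T.Walk u v)
    (q : T.Walk v w) : (p.append q).dartProd γ = q.dartProd γ * p.dartProd γ := by
  simp [dartProd]

theorem dartProd_reverse [Group M] {γ : T.Dart → M} (hsymm : ∀ d, γ d.symm = (γ d)⁻¹)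
    {u v : V} (p : T.Walk u v) : p.reverse.dartProd γ = (p.dartProd γ)⁻¹ := by
  simp [dartProd, List.prod_inv_reverse, Function.comp_def, hsymm]

theorem dartProd_map [Monoid M] [Monoid N] {γ : T.Dart → M} {γ' : T'.Dart → N} (f : T →g T')
    (φ : M →* N)
    (hf : ∀ d, γ' (f.mapDart d) = φ (γ d)) {u v : V} (p : T.Walk u v) :
    (p.map f).dartProd γ' = φ (p.dartProd γ) := by
  simp only [dartProd, darts_map, List.map_map, Function.comp_def, hf, List.map_reverse,
    map_list_prod]

end SimpleGraph.Walk

open SimpleGraph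

theorem deformation_change_of_basepoint_general
    {V : Type*} (T : SimpleGraph V) (hT : T.IsTree)
    {G : Type*} [Group G] (γ : T.Dart → G)
    (hsymm : ∀ d : T.Dart, γ d.symm = (γ d)⁻¹)
    (W : V → V → G)
    (hW : ∀ (u v : V) (p : T.Walk u v), W u v = ((p.darts.map γ).reverse).prod)
    {π : Type*} [Group π] (act : V → π → V)
    (hadj : ∀ (u v : V) (A : π), T.Adj u v ↔ T.Adj (act u A) (act v A))
    (ρ : π →* G)
    (hequiv : ∀ (d : T.Dart) (A : π),
      γ ⟨(act d.toProd.1 A, act d.toProd.2 A), (hadj d.toProd.1 d.toProd.2 A).mp d.adj⟩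
        = (ρ A)⁻¹ * γ d * ρ A)
    (v₀ v₀' : V) :
    ∀ A : π, ρ A * W v₀' (act v₀' A)
      = (W v₀ v₀') * (ρ A * W v₀ (act v₀ A)) * (W v₀ v₀')⁻¹ := by
  intro A
  let f : T →g T := ⟨(act · A), (hadj _ _ A).mp⟩
  have hf (d : T.Dart) : γ (f.mapDart d) = (MulAut.conj (ρ A)⁻¹ : G →* G) (γ d) := by
    rw [MonoidHom.coe_coe, MulAut.conj_apply, inv_inv]
    exact hequiv d A
  obtain ⟨p⟩ := hT.connected v₀ v₀'
  obtain ⟨q⟩ := hT.connected v₀ (act v₀ A)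
  have hp : W v₀ v₀' = p.dartProd γ := hW _ _ p
  have hq : W v₀ (act v₀ A) = q.dartProd γ := hW _ _ q
  have hpqp : W v₀' (act v₀' A) = (p.reverse.append (q.append (p.map f))).dartProd γ := hW _ _ _
  calc ρ A * W v₀' (act v₀' A)
      = ρ A * (p.reverse.append (q.append (p.map f))).dartProd γ := by rw [hpqp]
    _ = ρ A * ((ρ A)⁻¹ * p.dartProd γ * ρ A * q.dartProd γ * (p.dartProd γ)⁻¹) := by
        simp only [Walk.dartProd_append, Walk.dartProd_reverse hsymm, Walk.dartProd_map f _ hf,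
          MonoidHom.coe_coe, MulAut.conj_apply, inv_inv]
    _ = W v₀ v₀' * (ρ A * W v₀ (act v₀ A)) * (W v₀ v₀')⁻¹ := by
        rw [hp, hq]; group

/-- Lemma 2.6: changing the base vertex changes the deformation `E_γ(ρ)` by conjugation
by `P = W_γ(v₀, v₀')`. -/
theorem deformation_change_of_basepoint
    {V : Type*} (T : SimpleGraph V) (hT : T.IsTree)
    {G : Type*} [Group G] (γ : T.Dart → G)
    (hsymm : ∀ d : T.Dart, γ d.symm = (γ d)⁻¹)
    (W : V → V → G)
    (hW : ∀ (u v : V) (p : T.Walk u v), W u v = ((p.darts.map γ).reverse).prod)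
    {π : Type*} [Group π] (act : V → π → V)
    (hact_one : ∀ v, act v 1 = v)
    (hact_mul : ∀ (v : V) (A B : π), act (act v A) B = act v (A * B))
    (hadj : ∀ (u v : V) (A : π), T.Adj u v ↔ T.Adj (act u A) (act v A))
    (ρ : π →* G)
    (hequiv : ∀ (d : T.Dart) (A : π),
      γ ⟨(act d.toProd.1 A, act d.toProd.2 A), (hadj d.toProd.1 d.toProd.2 A).mp d.adj⟩
        = (ρ A)⁻¹ * γ d * ρ A)
    (v₀ v₀' : V) :
    ∀ A : π, ρ A * W v₀' (act v₀' A)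
      = (W v₀ v₀') * (ρ A * W v₀ (act v₀ A)) * (W v₀ v₀')⁻¹ :=
  deformation_change_of_basepoint_general T hT γ hsymm W hW act hadj ρ hequiv v₀ v₀'
end

section
/- With the equivariant tree labeling setup, let A ∈ π and let u be a vertex fixed by A (that is, u·A = u). Then E_γ(ρ)(A) = W_γ(v₀, u)⁻¹ · ρ(A) · W_γ(v₀, u). In particular, if e is an edge of T whose two endpoints are both fixed by A, and u is the endpoint of e for which the unique path in T from v₀ to u does not traverse e, then E_γ(ρ)(A) = W_γ(v₀, u)⁻¹ · ρ(A) · W_γ(v₀, u). -/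
/-!
Connectivity of the tree lets every `W a b` be computed along some walk, so `W` inherits from
the ordered label products the rules `W a c = W b c * W a b`, `W b a = (W a b)⁻¹` and, by
equivariance of `γ`, `W (a·A) (b·A) = ρ(A)⁻¹ * W a b * ρ(A)`. If `u·A = u`, splitting
`W v₀ (v₀·A)` at `u` gives `W (u·A) (v₀·A) * W v₀ u = ρ(A)⁻¹ * (W v₀ u)⁻¹ * ρ(A) * W v₀ u`.
-/

namespace SimpleGraph.Walk

variable {V V' G : Type*} {T : SimpleGraph V} {T' : SimpleGraph V'} [Group G]

def labelProd (γ : T.Dart → G) {u v : V} (p : T.Walk u v) : G :=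
  ((p.darts.map γ).reverse).prod

variable (γ : T.Dart → G)

theorem labelProd_append {u v w : V} (p : T.Walk u v) (q : T.Walk v w) :
    labelProd γ (p.append q) = labelProd γ q * labelProd γ p := by
  simp [labelProd, darts_append]

theorem labelProd_reverse (hsymm : ∀ d : T.Dart, γ d.symm = (γ d)⁻¹) {u v : V}
    (p : T.Walk u v) : labelProd γ p.reverse = (labelProd γ p)⁻¹ := by
  simp only [labelProd, darts_reverse, List.map_reverse, List.reverse_reverse, List.map_map,
    List.prod_inv_reverse]
  congr 2
  exact funext hsymm

theorem labelProd_map (γ' : T'.Dart → G) (f : T →g T') (g : G)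
    (hf : ∀ d : T.Dart, γ' (f.mapDart d) = g⁻¹ * γ d * g) {u v : V} (p : T.Walk u v) :
    labelProd γ' (p.map f) = g⁻¹ * labelProd γ p * g := by
  have hconj : γ' ∘ f.mapDart = MulAut.conj g⁻¹ ∘ γ := funext fun d => by
    rw [Function.comp_apply, hf, Function.comp_apply, MulAut.conj_apply, inv_inv]
  rw [labelProd, darts_map, List.map_map, hconj, ← List.map_map, ← List.map_reverse,
    ← map_list_prod, labelProd, MulAut.conj_apply, inv_inv]

end SimpleGraph.Walk

open SimpleGraph.Walk in
theorem deformation_on_stabilizer_is_conjugate_general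
    {V : Type*} (T : SimpleGraph V) (hT : T.IsTree)
    {G : Type*} [Group G] (γ : T.Dart → G)
    (hsymm : ∀ d : T.Dart, γ d.symm = (γ d)⁻¹)
    (W : V → V → G)
    (hW : ∀ (u v : V) (p : T.Walk u v), W u v = ((p.darts.map γ).reverse).prod)
    {π : Type*} [Group π] (act : V → π → V)
    (hadj : ∀ (u v : V) (A : π), T.Adj u v ↔ T.Adj (act u A) (act v A))
    (ρ : π →* G)
    (hequiv : ∀ (d : T.Dart) (A : π),
      γ ⟨(act d.toProd.1 A, act d.toProd.2 A), (hadj d.toProd.1 d.toProd.2 A).mp d.adj⟩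
        = (ρ A)⁻¹ * γ d * ρ A)
    (v₀ : V) :
    (∀ (A : π) (u : V), act u A = u →
      ρ A * W v₀ (act v₀ A) = (W v₀ u)⁻¹ * ρ A * W v₀ u) ∧
    -- in particular, for an edge whose two endpoints are both fixed by `A`, taking `u` to be
    -- the endpoint whose path from `v₀` does not traverse the edge
    (∀ (A : π) (d : T.Dart), act d.toProd.1 A = d.toProd.1 → act d.toProd.2 A = d.toProd.2 →
      ∀ u : V, (u = d.toProd.1 ∨ u = d.toProd.2) →
      (∀ (p : T.Walk v₀ u), p.IsPath → d.edge ∉ p.edges) →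
      ρ A * W v₀ (act v₀ A) = (W v₀ u)⁻¹ * ρ A * W v₀ u) := by
  replace hW : ∀ (u v : V) (p : T.Walk u v), W u v = labelProd γ p := hW
  have hconn : T.Preconnected := hT.connected.preconnected
  have W_trans (a b c : V) : W a c = W b c * W a b := by
    obtain ⟨p⟩ := hconn a b
    obtain ⟨q⟩ := hconn b c
    rw [hW a c (p.append q), hW b c q, hW a b p, labelProd_append]
  have W_symm (a b : V) : W b a = (W a b)⁻¹ := by
    obtain ⟨p⟩ := hconn a b
    rw [hW b a p.reverse, hW a b p, labelProd_reverse γ hsymm]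
  have W_act (A : π) (a b : V) : W (act a A) (act b A) = (ρ A)⁻¹ * W a b * ρ A := by
    obtain ⟨p⟩ := hconn a b
    let f : T →g T := ⟨(act · A), (hadj _ _ A).mp⟩
    calc W (act a A) (act b A) = labelProd γ (p.map f) := hW _ _ _
      _ = (ρ A)⁻¹ * W a b * ρ A := by
        rw [labelProd_map γ γ f (ρ A) (fun d => hequiv d A), hW a b p]
  have fixed_vertex (A : π) (u : V) (hu : act u A = u) :
      ρ A * W v₀ (act v₀ A) = (W v₀ u)⁻¹ * ρ A * W v₀ u := by
    have h := W_act A u v₀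
    rw [hu, W_symm v₀ u] at h
    rw [W_trans v₀ u, h]
    group
  refine ⟨fixed_vertex, fun A d hfix₁ hfix₂ u hu _ => ?_⟩
  rcases hu with rfl | rfl
  exacts [fixed_vertex A _ hfix₁, fixed_vertex A _ hfix₂]

/-- Lemma 2.7: if `u` is a vertex fixed by `A`, then
`E_γ(ρ)(A) = W_γ(v₀,u)⁻¹ · ρ(A) · W_γ(v₀,u)`; in particular this holds when `u` is an
endpoint of an edge both of whose endpoints are fixed by `A`. -/
theorem deformation_on_stabilizer_is_conjugate
    {V : Type*} (T : SimpleGraph V) (hT : T.IsTree)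
    {G : Type*} [Group G] (γ : T.Dart → G)
    (hsymm : ∀ d : T.Dart, γ d.symm = (γ d)⁻¹)
    (W : V → V → G)
    (hW : ∀ (u v : V) (p : T.Walk u v), W u v = ((p.darts.map γ).reverse).prod)
    {π : Type*} [Group π] (act : V → π → V)
    (hact_one : ∀ v, act v 1 = v)
    (hact_mul : ∀ (v : V) (A B : π), act (act v A) B = act v (A * B))
    (hadj : ∀ (u v : V) (A : π), T.Adj u v ↔ T.Adj (act u A) (act v A))
    (ρ : π →* G)
    (hequiv : ∀ (d : T.Dart) (A : π),
      γ ⟨(act d.toProd.1 A, act d.toProd.2 A), (hadj d.toProd.1 d.toProd.2 A).mp d.adj⟩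
        = (ρ A)⁻¹ * γ d * ρ A)
    (v₀ : V) :
    (∀ (A : π) (u : V), act u A = u →
      ρ A * W v₀ (act v₀ A) = (W v₀ u)⁻¹ * ρ A * W v₀ u) ∧
    -- in particular, for an edge whose two endpoints are both fixed by `A`, taking `u` to be
    -- the endpoint whose path from `v₀` does not traverse the edge
    (∀ (A : π) (d : T.Dart), act d.toProd.1 A = d.toProd.1 → act d.toProd.2 A = d.toProd.2 →
      ∀ u : V, (u = d.toProd.1 ∨ u = d.toProd.2) →
      (∀ (p : T.Walk v₀ u), p.IsPath → d.edge ∉ p.edges) →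
      ρ A * W v₀ (act v₀ A) = (W v₀ u)⁻¹ * ρ A * W v₀ u) :=
  deformation_on_stabilizer_is_conjugate_general T hT γ hsymm W hW act hadj ρ hequiv v₀
end

section
/- Let G be a group, k a natural number, and a, g : {1, ..., k} → G with a_i · g_i = g_i · a_i for every i. For each i define c_i = a_{i-1} · a_{i-2} · ⋯ · a_1 and d_i = g_{i-1} · g_{i-2} · ⋯ · g_1 (so c_1 = d_1 = 1). Then (a_k · ⋯ · a_1) · ((c_k⁻¹ · g_k · c_k) · ⋯ · (c_1⁻¹ · g_1 · c_1)) = (g_k · ⋯ · g_1) · ((d_k⁻¹ · a_k · d_k) · ⋯ · (d_1⁻¹ · a_1 · d_1)), and both sides equal (a_k · g_k) · (a_{k-1} · g_{k-1}) · ⋯ · (a_1 · g_1). -/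
/-- `prodDesc f k = f k * f (k-1) * ⋯ * f 1` (decreasing index order). -/
def prodDesc {G : Type*} [Monoid G] (f : ℕ → G) (k : ℕ) : G :=
  (((List.range k).reverse).map (fun i => f (i + 1))).prod

section Monoid

variable {M : Type*} [Monoid M]

@[simp]
lemma prodDesc_zero (f : ℕ → M) : prodDesc f 0 = 1 := rfl

lemma prodDesc_succ (f : ℕ → M) (k : ℕ) : prodDesc f (k + 1) = f (k + 1) * prodDesc f k := by
  simp [prodDesc, List.range_succ]

lemma prodDesc_congr {f f' : ℕ → M} {k : ℕ} (h : ∀ i, 1 ≤ i → i ≤ k → f i = f' i) :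
    prodDesc f k = prodDesc f' k := by
  induction k with
  | zero => rfl
  | succ n ih =>
    rw [prodDesc_succ, prodDesc_succ, h (n + 1) n.succ_pos le_rfl,
      ih fun i hi hin => h i hi (hin.trans n.le_succ)]

end Monoid

/-- Telescoping: conjugating `g i` by the partial product `a (i-1) ⋯ a 1` lets that partial
product cancel against the one carried along on the left. -/
lemma prodDesc_mul_prodDesc_conj {G : Type*} [Group G] (a g : ℕ → G) (k : ℕ) :
    prodDesc a k * prodDesc (fun i => (prodDesc a (i - 1))⁻¹ * g i * prodDesc a (i - 1)) k
      = prodDesc (fun i => a i * g i) k := by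
  induction k with
  | zero => simp
  | succ n ih =>
    calc prodDesc a (n + 1) *
          prodDesc (fun i => (prodDesc a (i - 1))⁻¹ * g i * prodDesc a (i - 1)) (n + 1)
        = a (n + 1) * g (n + 1) * (prodDesc a n *
            prodDesc (fun i => (prodDesc a (i - 1))⁻¹ * g i * prodDesc a (i - 1)) n) := by
          rw [prodDesc_succ, prodDesc_succ, Nat.add_sub_cancel]
          group
      _ = prodDesc (fun i => a i * g i) (n + 1) := by rw [ih, prodDesc_succ]

/-- Theorem 3.2 (algebraic content): if `a i` and `g i` commute for each `i`, then with
`c i = a (i-1) ⋯ a 1` and `d i = g (i-1) ⋯ g 1`, the deformation of `a` by conjugated `g`'s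
equals the deformation of `g` by conjugated `a`'s, and both equal `(a k g k) ⋯ (a 1 g 1)`. -/
theorem commuting_deformations_identity {G : Type*} [Group G] (k : ℕ) (a g : ℕ → G)
    (hcomm : ∀ i, 1 ≤ i → i ≤ k → a i * g i = g i * a i) :
    (prodDesc a k *
        prodDesc (fun i => (prodDesc a (i - 1))⁻¹ * g i * prodDesc a (i - 1)) k
      = prodDesc g k *
        prodDesc (fun i => (prodDesc g (i - 1))⁻¹ * a i * prodDesc g (i - 1)) k) ∧
    (prodDesc a k *
        prodDesc (fun i => (prodDesc a (i - 1))⁻¹ * g i * prodDesc a (i - 1)) k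
      = prodDesc (fun i => a i * g i) k) := by
  refine ⟨?_, prodDesc_mul_prodDesc_conj a g k⟩
  rw [prodDesc_mul_prodDesc_conj, prodDesc_mul_prodDesc_conj]
  exact prodDesc_congr hcomm
end

section
/- With the equivariant tree labeling setup, suppose γ, α : Dart(T) → G both satisfy the inverse condition (γ(d.symm) = γ(d)⁻¹ and α(d.symm) = α(d)⁻¹) and ρ-equivariance, and suppose γ(d) · α(d) = α(d) · γ(d) for every dart d. For each dart d, let u(d) be the endpoint of the edge of d for which the unique path in T from v₀ to u(d) does not traverse that edge, and define new labelings γ'(d) = W_α(v₀, u(d))⁻¹ · γ(d) · W_α(v₀, u(d)) and α'(d) = W_γ(v₀, u(d))⁻¹ · α(d) · W_γ(v₀, u(d)). Then γ' and α' also satisfy the inverse condition, and for every A ∈ π: E_α(ρ)(A) · W_{γ'}(v₀, v₀·A) = E_γ(ρ)(A) · W_{α'}(v₀, v₀·A); that is, the deformation by γ of the deformation by α of ρ equals the deformation by α of the deformation by γ of ρ. -/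
/-!
Write `f x = W_α(v₀, x) W_{γ'}(v₀, x)` and `g x = W_γ(v₀, x) W_{α'}(v₀, x)`. Crossing a dart `d`
away from `v₀`, i.e. with `u d = d.fst`, multiplies `W_α(v₀, ·)` on the left by `α d` and
`W_{γ'}(v₀, ·)` by the conjugate of `γ d` by `W_α(v₀, d.fst)`, so `f` gets multiplied on the left
by `α d γ d`; likewise `g` by `γ d α d`. These agree since the labels commute, and since every
vertex is reached from `v₀` by a path crossing each of its darts away from `v₀`, `f = g`.
The inverse conditions hold because `u d.symm = u d`: in a tree only one endpoint of an edge
can be reached from `v₀` without crossing it, every edge being a bridge.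
-/

namespace SimpleGraph

variable {V : Type*} {T : SimpleGraph V}

theorem IsAcyclic.eq_of_notMem_edges (hT : T.IsAcyclic) {e : Sym2 V} (he : e ∈ T.edgeSet)
    {v x y : V} (hx : x ∈ e) (hy : y ∈ e) (p : T.Walk v x) (q : T.Walk v y)
    (hp : e ∉ p.edges) (hq : e ∉ q.edges) : x = y := by
  by_contra hne
  obtain rfl := (Sym2.mem_and_mem_iff hne).1 ⟨hx, hy⟩
  have hmem := isBridge_iff_forall_walk_mem_edges.1 (isAcyclic_iff_forall_isBridge.1 hT he)
    (p.reverse.append q)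
  simp only [Walk.edges_append, Walk.edges_reverse, List.mem_append, List.mem_reverse] at hmem
  tauto

section BasePoint

variable {v₀ : V} {u : T.Dart → V}

theorem IsTree.eq_of_notMem_edges (hT : T.IsTree) (hu_edge : ∀ d : T.Dart, u d ∈ d.edge)
    (hu_path : ∀ (d : T.Dart) (p : T.Walk v₀ (u d)), p.IsPath → d.edge ∉ p.edges)
    {d : T.Dart} {x : V} (hx : x ∈ d.edge) (p : T.Walk v₀ x) (hp : d.edge ∉ p.edges) :
    x = u d := by
  classical
  obtain ⟨q⟩ := hT.connected.preconnected v₀ (u d)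
  exact hT.isAcyclic.eq_of_notMem_edges d.edge_mem hx (hu_edge d) p q.bypass hp
    (hu_path d _ q.bypass_isPath)

theorem IsTree.apply_symm_eq (hT : T.IsTree) (hu_edge : ∀ d : T.Dart, u d ∈ d.edge)
    (hu_path : ∀ (d : T.Dart) (p : T.Walk v₀ (u d)), p.IsPath → d.edge ∉ p.edges)
    (d : T.Dart) : u d.symm = u d := by
  classical
  obtain ⟨q⟩ := hT.connected.preconnected v₀ (u d.symm)
  have hq := hu_path d.symm _ q.bypass_isPath
  rw [d.edge_symm] at hq
  exact hT.eq_of_notMem_edges hu_edge hu_path (d.edge_symm ▸ hu_edge d.symm) q.bypass hq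

theorem IsTree.induction_from_base (hT : T.IsTree) (hu_edge : ∀ d : T.Dart, u d ∈ d.edge)
    (hu_path : ∀ (d : T.Dart) (p : T.Walk v₀ (u d)), p.IsPath → d.edge ∉ p.edges)
    {P : V → Prop} (base : P v₀) (step : ∀ d : T.Dart, u d = d.fst → P d.fst → P d.snd)
    (x : V) : P x := by
  classical
  obtain ⟨p⟩ := hT.connected.preconnected x v₀
  suffices ∀ y w (q : T.Walk y w), w = v₀ → q.IsPath → P y from
    this x v₀ p.bypass rfl p.bypass_isPath
  intro y w q
  induction q with
  | nil => rintro rfl -; exact base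
  | @cons y z _ h q ih =>
    rintro rfl hq
    have hy : y ∉ q.support := ((Walk.cons_isPath_iff h q).1 hq).2
    have hud : u ⟨(z, y), h.symm⟩ = z := by
      refine (hT.eq_of_notMem_edges hu_edge hu_path (by simp [Dart.edge]) q.reverse ?_).symm
      rw [Walk.edges_reverse, List.mem_reverse]
      exact fun hmem => hy (q.snd_mem_support_of_mem_edges hmem)
    exact step ⟨(z, y), h.symm⟩ hud (ih rfl hq.of_cons)

end BasePoint

section WalkProd

variable {G : Type*} [Group G]

def IsWalkProd (β : T.Dart → G) (W : V → V → G) : Prop :=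
  ∀ (x y : V) (p : T.Walk x y), W x y = ((p.darts.map β).reverse).prod

variable {β : T.Dart → G} {W : V → V → G}

theorem IsWalkProd.apply_self (hW : IsWalkProd β W) (x : V) : W x x = 1 := by
  simpa using hW x x .nil

theorem IsWalkProd.apply_snd (hW : IsWalkProd β W) {x : V} {d : T.Dart}
    (h : T.Reachable x d.fst) : W x d.snd = β d * W x d.fst := by
  obtain ⟨p⟩ := h
  rw [hW _ _ (p.concat d.adj), hW _ _ p]
  simp [Walk.darts_concat]

end WalkProd

end SimpleGraph

theorem deformations_commute_general
    {V : Type*} (T : SimpleGraph V) (hT : T.IsTree)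
    {G : Type*} [Group G] (γ α : T.Dart → G)
    (hγsymm : ∀ d : T.Dart, γ d.symm = (γ d)⁻¹)
    (hαsymm : ∀ d : T.Dart, α d.symm = (α d)⁻¹)
    (Wγ Wα : V → V → G)
    (hWγ : ∀ (u v : V) (p : T.Walk u v), Wγ u v = ((p.darts.map γ).reverse).prod)
    (hWα : ∀ (u v : V) (p : T.Walk u v), Wα u v = ((p.darts.map α).reverse).prod)
    {π : Type*} [Group π] (act : V → π → V)
    (ρ : π →* G)
    (hcomm : ∀ d : T.Dart, γ d * α d = α d * γ d)
    (v₀ : V)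
    -- `u d` is the endpoint of the edge of `d` whose path from `v₀` does not traverse
    -- that edge
    (u : T.Dart → V)
    (hu_mem : ∀ d : T.Dart, u d = d.toProd.1 ∨ u d = d.toProd.2)
    (hu_path : ∀ (d : T.Dart) (p : T.Walk v₀ (u d)), p.IsPath → d.edge ∉ p.edges)
    -- `W_{γ'}` and `W_{α'}` are the ordered-product functions for the new labelings
    (Wγ' Wα' : V → V → G)
    (hWγ' : ∀ (x y : V) (p : T.Walk x y),
      Wγ' x y = ((p.darts.map (fun d => (Wα v₀ (u d))⁻¹ * γ d * Wα v₀ (u d))).reverse).prod)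
    (hWα' : ∀ (x y : V) (p : T.Walk x y),
      Wα' x y = ((p.darts.map (fun d => (Wγ v₀ (u d))⁻¹ * α d * Wγ v₀ (u d))).reverse).prod) :
    -- γ' and α' satisfy the inverse condition
    (∀ d : T.Dart,
      (Wα v₀ (u d.symm))⁻¹ * γ d.symm * Wα v₀ (u d.symm)
        = ((Wα v₀ (u d))⁻¹ * γ d * Wα v₀ (u d))⁻¹) ∧
    (∀ d : T.Dart,
      (Wγ v₀ (u d.symm))⁻¹ * α d.symm * Wγ v₀ (u d.symm)
        = ((Wγ v₀ (u d))⁻¹ * α d * Wγ v₀ (u d))⁻¹) ∧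
    -- E_γ(E_α(ρ)) = E_α(E_γ(ρ))
    (∀ A : π, (ρ A * Wα v₀ (act v₀ A)) * Wγ' v₀ (act v₀ A)
      = (ρ A * Wγ v₀ (act v₀ A)) * Wα' v₀ (act v₀ A)) := by
  have hu_edge : ∀ d : T.Dart, u d ∈ d.edge := fun d => by
    rcases hu_mem d with h | h <;> simp [h, SimpleGraph.Dart.edge]
  have hu_symm := hT.apply_symm_eq hu_edge hu_path
  have hreach := hT.connected.preconnected v₀
  have hα : SimpleGraph.IsWalkProd α Wα := hWα
  have hγ : SimpleGraph.IsWalkProd γ Wγ := hWγ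
  have hα' : SimpleGraph.IsWalkProd _ Wα' := hWα'
  have hγ' : SimpleGraph.IsWalkProd _ Wγ' := hWγ'
  have hconj : ∀ a g w z : G, a * w * (w⁻¹ * g * w * z) = a * g * (w * z) := by
    intros; group
  have hprod_eq : ∀ x, Wα v₀ x * Wγ' v₀ x = Wγ v₀ x * Wα' v₀ x := by
    refine hT.induction_from_base hu_edge hu_path ?_ fun d hud ih => ?_
    · rw [hα.apply_self, hγ.apply_self, hα'.apply_self, hγ'.apply_self]
    · rw [hα.apply_snd (hreach _), hγ'.apply_snd (hreach _), hγ.apply_snd (hreach _),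
        hα'.apply_snd (hreach _), hud, hconj, hconj, ← hcomm, ih]
  refine ⟨fun d => ?_, fun d => ?_, fun A => ?_⟩
  · rw [hu_symm, hγsymm]
    group
  · rw [hu_symm, hαsymm]
    group
  · rw [mul_assoc, mul_assoc, hprod_eq]

/-- Theorem 3.2: deformations along disjoint (multi-)hypersurfaces with pointwise commuting
labelings commute. With `γ' d = W_α(v₀, u d)⁻¹ γ(d) W_α(v₀, u d)` and
`α' d = W_γ(v₀, u d)⁻¹ α(d) W_γ(v₀, u d)`, both new labelings satisfy the inverse condition,
and `E_γ(E_α(ρ)) = E_α(E_γ(ρ))`, i.e. `E_α(ρ)(A) · W_{γ'}(v₀, v₀·A) = E_γ(ρ)(A) · W_{α'}(v₀, v₀·A)`. -/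
theorem deformations_commute
    {V : Type*} (T : SimpleGraph V) (hT : T.IsTree)
    {G : Type*} [Group G] (γ α : T.Dart → G)
    (hγsymm : ∀ d : T.Dart, γ d.symm = (γ d)⁻¹)
    (hαsymm : ∀ d : T.Dart, α d.symm = (α d)⁻¹)
    (Wγ Wα : V → V → G)
    (hWγ : ∀ (u v : V) (p : T.Walk u v), Wγ u v = ((p.darts.map γ).reverse).prod)
    (hWα : ∀ (u v : V) (p : T.Walk u v), Wα u v = ((p.darts.map α).reverse).prod)
    {π : Type*} [Group π] (act : V → π → V)
    (hact_one : ∀ v, act v 1 = v)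
    (hact_mul : ∀ (v : V) (A B : π), act (act v A) B = act v (A * B))
    (hadj : ∀ (u v : V) (A : π), T.Adj u v ↔ T.Adj (act u A) (act v A))
    (ρ : π →* G)
    (hγequiv : ∀ (d : T.Dart) (A : π),
      γ ⟨(act d.toProd.1 A, act d.toProd.2 A), (hadj d.toProd.1 d.toProd.2 A).mp d.adj⟩
        = (ρ A)⁻¹ * γ d * ρ A)
    (hαequiv : ∀ (d : T.Dart) (A : π),
      α ⟨(act d.toProd.1 A, act d.toProd.2 A), (hadj d.toProd.1 d.toProd.2 A).mp d.adj⟩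
        = (ρ A)⁻¹ * α d * ρ A)
    (hcomm : ∀ d : T.Dart, γ d * α d = α d * γ d)
    (v₀ : V)
    -- `u d` is the endpoint of the edge of `d` whose path from `v₀` does not traverse
    -- that edge
    (u : T.Dart → V)
    (hu_mem : ∀ d : T.Dart, u d = d.toProd.1 ∨ u d = d.toProd.2)
    (hu_path : ∀ (d : T.Dart) (p : T.Walk v₀ (u d)), p.IsPath → d.edge ∉ p.edges)
    -- `W_{γ'}` and `W_{α'}` are the ordered-product functions for the new labelings
    (Wγ' Wα' : V → V → G)
    (hWγ' : ∀ (x y : V) (p : T.Walk x y),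
      Wγ' x y = ((p.darts.map (fun d => (Wα v₀ (u d))⁻¹ * γ d * Wα v₀ (u d))).reverse).prod)
    (hWα' : ∀ (x y : V) (p : T.Walk x y),
      Wα' x y = ((p.darts.map (fun d => (Wγ v₀ (u d))⁻¹ * α d * Wγ v₀ (u d))).reverse).prod) :
    -- γ' and α' satisfy the inverse condition
    (∀ d : T.Dart,
      (Wα v₀ (u d.symm))⁻¹ * γ d.symm * Wα v₀ (u d.symm)
        = ((Wα v₀ (u d))⁻¹ * γ d * Wα v₀ (u d))⁻¹) ∧
    (∀ d : T.Dart,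
      (Wγ v₀ (u d.symm))⁻¹ * α d.symm * Wγ v₀ (u d.symm)
        = ((Wγ v₀ (u d))⁻¹ * α d * Wγ v₀ (u d))⁻¹) ∧
    -- E_γ(E_α(ρ)) = E_α(E_γ(ρ))
    (∀ A : π, (ρ A * Wα v₀ (act v₀ A)) * Wγ' v₀ (act v₀ A)
      = (ρ A * Wγ v₀ (act v₀ A)) * Wα' v₀ (act v₀ A)) :=
  deformations_commute_general T hT γ α hγsymm hαsymm Wγ Wα hWγ hWα act ρ hcomm v₀ u hu_mem hu_path
    Wγ' Wα' hWγ' hWα'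
end
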